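/- Let R be a ring, a ∈ R, and suppose the right ideal (1-a²)R is generated by an idempotent e and is contained in the ideal Rr(a) generated by the right annihilator of a. Then (1-a²)R, as a right R-module, is isomorphic to a direct summand of a finite direct sum of copies of r(a); i.e., (1-a²)R ∝ r(a). -/

import Mathlib

noncomputable section

namespace SepExchange

variable (R : Type) [Ring R]

/-- The right annihilator `r(a)` as a right `R`-submodule of `R`. -/
def rAnn (a : R) : Submodule Rᵐᵒᵖ R where
  carrier := {x | a * x = 0}
  add_mem' := by intro x y hx hy; simp_all [Set.mem_setOf_eq, mul_add]
  zero_mem' := by simp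
  smul_mem' := by
    intro c x hx
    simp only [Set.mem_setOf_eq, MulOpposite.smul_eq_mul_unop] at *
    rw [← mul_assoc, hx, zero_mul]

/-- The principal right ideal `aR` as a right `R`-submodule of `R`. -/
def rIdeal (a : R) : Submodule Rᵐᵒᵖ R := Submodule.span Rᵐᵒᵖ {a}

/-- The right `R`-module `a·r(a²) = {a*t : a²*t = 0}`. -/
def arAnn2 (a : R) : Submodule Rᵐᵒᵖ R where
  carrier := {x | ∃ t, x = a * t ∧ a ^ 2 * t = 0}
  add_mem' := by
    rintro x y ⟨t1, rfl, h1⟩ ⟨t2, rfl, h2⟩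
    exact ⟨t1 + t2, by rw [mul_add], by rw [mul_add, h1, h2, add_zero]⟩
  zero_mem' := ⟨0, by simp, by simp⟩
  smul_mem' := by
    intro c x ⟨t, hx, ht⟩
    subst hx
    refine ⟨t * c.unop, ?_, ?_⟩
    · simp only [MulOpposite.smul_eq_mul_unop, mul_assoc]
    · rw [← mul_assoc, ht, zero_mul]

/-- `R` is an exchange ring: for each `a` there is an idempotent `e ∈ aR`
with `1 - e ∈ (1-a)R`. -/
def ExchangeRing : Prop :=
  ∀ a : R, ∃ e : R, IsIdempotentElem e ∧ (∃ r, e = a * r) ∧ (∃ s, (1 : R) - e = (1 - a) * s)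

/-- `R` is separative: `A⊕A ≅ A⊕B ≅ B⊕B ⟹ A ≅ B` for finitely generated
projective right `R`-modules. -/
def Separative : Prop :=
  ∀ (A B : Type) [AddCommGroup A] [Module Rᵐᵒᵖ A] [AddCommGroup B] [Module Rᵐᵒᵖ B],
    Module.Finite Rᵐᵒᵖ A → Module.Projective Rᵐᵒᵖ A →
    Module.Finite Rᵐᵒᵖ B → Module.Projective Rᵐᵒᵖ B →
    Nonempty ((A × A) ≃ₗ[Rᵐᵒᵖ] (A × B)) → Nonempty ((A × B) ≃ₗ[Rᵐᵒᵖ] (B × B)) →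
    Nonempty (A ≃ₗ[Rᵐᵒᵖ] B)

/-- `a` is unit-regular. -/
def IsUnitRegular (a : R) : Prop := ∃ u : Rˣ, a = a * (u : R) * a

/-- `a` is special clean: there is an idempotent `e` with `a - e` a unit and
`aR ∩ eR = 0`. -/
def IsSpecialClean (a : R) : Prop :=
  ∃ e : R, IsIdempotentElem e ∧ IsUnit (a - e) ∧ rIdeal R a ⊓ rIdeal R e = ⊥

/-- `A ≲⊕ B`: `A` is isomorphic to a direct summand of `B` (right `R`-modules). -/
def SummandOf (A B : Type) [AddCommGroup A] [Module Rᵐᵒᵖ A]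
    [AddCommGroup B] [Module Rᵐᵒᵖ B] : Prop :=
  ∃ N N' : Submodule Rᵐᵒᵖ B, IsCompl N N' ∧ Nonempty (A ≃ₗ[Rᵐᵒᵖ] ↥N)

/-- `A ∝ B`: `A` is isomorphic to a direct summand of a finite direct sum of
copies of `B`. -/
def Propto (A B : Type) [AddCommGroup A] [Module Rᵐᵒᵖ A]
    [AddCommGroup B] [Module Rᵐᵒᵖ B] : Prop :=
  ∃ m : ℕ, 0 < m ∧ SummandOf R A (Fin m → B)

end SepExchange

/-! Since `r(a)` is a right ideal, its left span `R r(a)` is already two-sided, so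
`e = ∑ cᵢ xᵢ` with `xᵢ ∈ r(a)`. Then `y ↦ (xᵢ y)ᵢ` embeds `eR` into `r(a)ⁿ`, split by
`t ↦ e ∑ cᵢ tᵢ`, because `e ∑ cᵢ xᵢ y = e² y = y` for `y ∈ eR`. -/

namespace SepExchange

variable {R : Type} [Ring R]

instance isTwoSided_span_submodule (N : Submodule Rᵐᵒᵖ R) :
    (Ideal.span (N : Set R)).IsTwoSided :=
  ⟨fun b ha => by
    induction ha using Submodule.span_induction with
    | mem x hx => exact Ideal.subset_span (N.smul_mem (MulOpposite.op b) hx)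
    | zero => simp
    | add x y _ _ hx hy => rw [add_mul]; exact add_mem hx hy
    | smul r x _ hx => rw [smul_eq_mul, mul_assoc]; exact Ideal.mul_mem_left _ r hx⟩

theorem mem_span_of_mem_twoSidedIdeal_span (N : Submodule Rᵐᵒᵖ R) {x : R}
    (hx : x ∈ TwoSidedIdeal.span (N : Set R)) : x ∈ Ideal.span (N : Set R) :=
  Ideal.mem_toTwoSided.mp <| TwoSidedIdeal.mem_span_iff.mp hx _ <| by
    rw [Ideal.coe_toTwoSided]; exact Ideal.subset_span

theorem summandOf_of_leftInverse {A B : Type} [AddCommGroup A] [Module Rᵐᵒᵖ A]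
    [AddCommGroup B] [Module Rᵐᵒᵖ B] (f : A →ₗ[Rᵐᵒᵖ] B) (g : B →ₗ[Rᵐᵒᵖ] A)
    (hgf : Function.LeftInverse g f) : SummandOf R A B :=
  ⟨LinearMap.range f, LinearMap.ker (f.rangeRestrict ∘ₗ g),
    LinearMap.isCompl_of_proj (by rintro ⟨_, a, rfl⟩; ext; simp [hgf a]),
    ⟨LinearEquiv.ofLeftInverse hgf⟩⟩

theorem mem_rIdeal_iff {e y : R} : y ∈ rIdeal R e ↔ ∃ r, e * r = y := by
  simp [rIdeal, Submodule.mem_span_singleton, MulOpposite.smul_eq_mul_unop]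

theorem mul_mem_rIdeal (e r : R) : e * r ∈ rIdeal R e := mem_rIdeal_iff.mpr ⟨r, rfl⟩

theorem mul_eq_self_of_mem_rIdeal {e y : R} (he : IsIdempotentElem e)
    (hy : y ∈ rIdeal R e) : e * y = y := by
  obtain ⟨r, rfl⟩ := mem_rIdeal_iff.mp hy
  rw [← mul_assoc, he.eq]

theorem summandOf_rIdeal_pi {ι : Type} [Fintype ι] {e : R} (he : IsIdempotentElem e)
    (N : Submodule Rᵐᵒᵖ R) (c : ι → R) (x : ι → N) (hsum : ∑ i, c i * x i = e) :
    SummandOf R (rIdeal R e) (ι → N) := by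
  let mulLeft (r : R) : R →ₗ[Rᵐᵒᵖ] R := DistribSMul.toLinearMap Rᵐᵒᵖ R r
  let toPi : rIdeal R e →ₗ[Rᵐᵒᵖ] (ι → N) := LinearMap.pi fun i =>
    (mulLeft (x i) ∘ₗ (rIdeal R e).subtype).codRestrict N
      fun y => N.smul_mem (MulOpposite.op (y : R)) (x i).2
  let ofPi : (ι → N) →ₗ[Rᵐᵒᵖ] rIdeal R e :=
    (∑ i, mulLeft (e * c i) ∘ₗ N.subtype ∘ₗ LinearMap.proj i).codRestrict _ fun t =>
      by simpa [mulLeft, mul_assoc] using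
        Submodule.sum_mem _ fun i _ => mul_mem_rIdeal e (c i * t i)
  refine summandOf_of_leftInverse toPi ofPi fun y => Subtype.ext ?_
  calc (ofPi (toPi y) : R) = ∑ i, e * c i * (x i * y) := by
        simp [ofPi, toPi, mulLeft]; rfl
    _ = e * (∑ i, c i * x i) * y := by
        simp only [Finset.mul_sum, Finset.sum_mul, mul_assoc]
    _ = y := by rw [hsum, he.eq, mul_eq_self_of_mem_rIdeal he y.2]

theorem propto_rIdeal_of_mem_span {e : R} (he : IsIdempotentElem e) (N : Submodule Rᵐᵒᵖ R)
    (heN : e ∈ Ideal.span (N : Set R)) : Propto R (rIdeal R e) N := by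
  obtain ⟨n, c, x, hsum⟩ := Submodule.mem_span_set'.mp heN
  refine ⟨n + 1, n.succ_pos, summandOf_rIdeal_pi he N (Fin.cons 0 c)
    (Fin.cons 0 fun i => ⟨x i, (x i).2⟩) ?_⟩
  simpa [Fin.sum_univ_succ] using hsum

end SepExchange

open SepExchange in
/-- If `(1-a²)R` is generated by an idempotent and is contained in the
two-sided ideal `Rr(a)`, then `(1-a²)R ∝ r(a)`. -/
theorem stmt8 (R : Type) [Ring R] (a e : R)
    (he : IsIdempotentElem e) (hgen : rIdeal R (1 - a ^ 2) = rIdeal R e)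
    (hsub : ∀ x ∈ rIdeal R (1 - a ^ 2), x ∈ TwoSidedIdeal.span {x : R | a * x = 0}) :
    Propto R (↥(rIdeal R (1 - a ^ 2))) (↥(rAnn R a)) := by
  have heM : e ∈ rIdeal R (1 - a ^ 2) := hgen ▸ Submodule.mem_span_singleton_self e
  rw [hgen]
  exact propto_rIdeal_of_mem_span he (rAnn R a)
    (mem_span_of_mem_twoSidedIdeal_span (rAnn R a) (hsub e heM))
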